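/- Let 𝔽 be a commutative family of continuous self-maps of a compact metric space X. Then the non-autonomous system (X, 𝔽) is weakly mixing if and only if for every finite collection of nonempty open sets U_1,...,U_m there exists a strictly increasing sequence (r_n) of positive integers such that the closures of ω_{r_n}(U_i) converge to X in the Hausdorff metric for every i = 1,...,m. -/

import Mathlib

/-!
Weak mixing of a commuting family upgrades, by Furstenberg's trick, to a common hitting time
for any finite number of pairs of nonempty open sets. Pairing each `U i` with the balls of a
finite `ε`-net makes all the `ω n '' U i` `2ε`-dense at once, and adding pairs `(A, B)` with
`ω j '' A ∩ B = ∅` for `j < M` (possible as soon as `X` has two points) forces `n ≥ M`; a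
diagonal extraction then yields `r`. Conversely, Hausdorff convergence to `X` makes
`ω (r j) '' U i` eventually meet every nonempty open set.
-/

open Filter Function Metric Set Topology

section Compositions

variable {X : Type*} {f ω : ℕ → X → X}

theorem continuous_of_comp_succ [TopologicalSpace X] (hfc : ∀ i, Continuous (f i))
    (hω0 : ω 0 = id) (hω : ∀ k, ω (k + 1) = f (k + 1) ∘ ω k) (n : ℕ) :
    Continuous (ω n) := by
  induction n with
  | zero => simpa [hω0] using continuous_id
  | succ n ih => simpa [hω] using (hfc _).comp ih

theorem commute_of_comp_succ (hcomm : ∀ i j, Function.Commute (f i) (f j))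
    (hω0 : ω 0 = id) (hω : ∀ k, ω (k + 1) = f (k + 1) ∘ ω k) (m n : ℕ) :
    Function.Commute (ω m) (ω n) := by
  have hfω : ∀ i n, Function.Commute (f i) (ω n) := fun i n => by
    induction n with
    | zero => simpa [hω0] using Function.Commute.id_right
    | succ n ih => simpa [hω] using (hcomm i (n + 1)).comp_right ih
  induction m with
  | zero => simpa [hω0] using Function.Commute.id_left
  | succ m ih => simpa [hω] using (hfω (m + 1) n).comp_left ih

end Compositions

theorem exists_isOpen_disjoint_image {X Y : Type*} [TopologicalSpace X] [Nonempty X]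
    [TopologicalSpace Y] [T2Space Y] [Nontrivial Y] {g : X → Y} (hg : Continuous g) :
    ∃ A B, IsOpen A ∧ IsOpen B ∧ A.Nonempty ∧ B.Nonempty ∧ Disjoint (g '' A) B := by
  obtain ⟨x⟩ := ‹Nonempty X›
  obtain ⟨y, hy⟩ := exists_ne (g x)
  obtain ⟨W, B, hW, hB, hxW, hyB, hWB⟩ := t2_separation hy.symm
  exact ⟨g ⁻¹' W, B, hW.preimage hg, hB, ⟨x, hxW⟩, ⟨y, hyB⟩,
    hWB.mono_left (image_preimage_subset g W)⟩

theorem exists_strictMono_tendsto_zero_of_frequently {ι : Type*} {d : ι → ℕ → ℝ}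
    (hd : ∀ i n, 0 ≤ d i n) (h : ∀ ε > 0, ∃ᶠ n in atTop, ∀ i, d i n < ε) :
    ∃ r : ℕ → ℕ, StrictMono r ∧ 1 ≤ r 0 ∧
      ∀ i, Tendsto (fun j => d i (r j)) atTop (𝓝 0) := by
  obtain ⟨r, hr, hP⟩ := extraction_forall_of_frequently
    (P := fun j n => (∀ i, d i n < 1 / ((j : ℝ) + 1)) ∧ 1 ≤ n)
    fun j => (h _ (by positivity)).and_eventually (eventually_ge_atTop 1)
  refine ⟨r, hr, (hP 0).2, fun i => ?_⟩
  exact squeeze_zero (fun j => hd i (r j)) (fun j => ((hP j).1 i).le)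
    tendsto_one_div_add_atTop_nhds_zero_nat

theorem hausdorffDist_univ_le_of_inter_ball_nonempty {X : Type*} [PseudoMetricSpace X]
    {S t : Set X} {δ : ℝ} (hδ : 0 ≤ δ) (ht : univ ⊆ ⋃ c ∈ t, ball c δ)
    (hS : ∀ c ∈ t, (S ∩ ball c δ).Nonempty) : hausdorffDist S univ ≤ 2 * δ := by
  refine hausdorffDist_le_of_mem_dist (by positivity)
    (fun x _ => ⟨x, mem_univ x, by simp [hδ]⟩) fun x _ => ?_
  obtain ⟨c, hct, hxc⟩ := mem_iUnion₂.mp (ht (mem_univ x))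
  obtain ⟨y, hyS, hyc⟩ := hS c hct
  refine ⟨y, hyS, ?_⟩
  linarith [dist_triangle_right x y c, mem_ball.mp hxc, mem_ball.mp hyc]

theorem eventually_inter_nonempty_of_tendsto_hausdorffDist {X ι : Type*} [PseudoMetricSpace X]
    [BoundedSpace X] {l : Filter ι} {S : ι → Set X} (hS : ∀ i, (S i).Nonempty)
    (h : Tendsto (fun i => hausdorffDist (S i) univ) l (𝓝 0)) {V : Set X} (hV : IsOpen V)
    (hVne : V.Nonempty) : ∀ᶠ i in l, (S i ∩ V).Nonempty := by
  obtain ⟨v, hv⟩ := hVne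
  obtain ⟨ε, hε, hvV⟩ := isOpen_iff.mp hV v hv
  filter_upwards [h.eventually (eventually_lt_nhds hε)] with i hi
  rw [hausdorffDist_comm] at hi
  obtain ⟨y, hyS, hyv⟩ := exists_dist_lt_of_hausdorffDist_lt (mem_univ v) hi
    (hausdorffEDist_ne_top_of_nonempty_of_bounded ⟨v, mem_univ v⟩ (hS i)
      (Bornology.IsBounded.all _) (Bornology.IsBounded.all _))
  exact ⟨y, hyS, hvV (mem_ball_comm.mp hyv)⟩

section WeakMixing

variable {X : Type*} [TopologicalSpace X]

def IsWeaklyMixing (ω : ℕ → X → X) : Prop :=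
  ∀ U₁ U₂ V₁ V₂ : Set X, IsOpen U₁ → IsOpen U₂ → IsOpen V₁ → IsOpen V₂ →
    U₁.Nonempty → U₂.Nonempty → V₁.Nonempty → V₂.Nonempty →
    ∃ k : ℕ, 1 ≤ k ∧ (ω k '' U₁ ∩ V₁).Nonempty ∧ (ω k '' U₂ ∩ V₂).Nonempty

variable {ω : ℕ → X → X}

/-- Furstenberg's trick: a time `k` sending `A` into `U` and `B` into `V` reduces the pairs
`(A, B)` and `(U, V)` to the single pair `(A ∩ ω k ⁻¹' U, B ∩ ω k ⁻¹' V)`. -/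
theorem IsWeaklyMixing.exists_forall_image_inter_nonempty [Nonempty X] (hwm : IsWeaklyMixing ω)
    (hc : ∀ n, Continuous (ω n)) (hcomm : ∀ m n, Function.Commute (ω m) (ω n))
    {ι : Type*} [Finite ι] {U V : ι → Set X} (hU : ∀ i, IsOpen (U i))
    (hV : ∀ i, IsOpen (V i))
    (hUne : ∀ i, (U i).Nonempty) (hVne : ∀ i, (V i).Nonempty) :
    ∃ n, ∀ i, (ω n '' U i ∩ V i).Nonempty := by
  classical
  have : Fintype ι := Fintype.ofFinite ι
  suffices key : ∀ s : Finset ι, ∀ A B : Set X, IsOpen A → IsOpen B →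
      A.Nonempty → B.Nonempty →
      ∃ n, (ω n '' A ∩ B).Nonempty ∧ ∀ i ∈ s, (ω n '' U i ∩ V i).Nonempty by
    obtain ⟨n, -, hn⟩ := key Finset.univ univ univ isOpen_univ isOpen_univ univ_nonempty
      univ_nonempty
    exact ⟨n, fun i => hn i (Finset.mem_univ i)⟩
  intro s
  induction s using Finset.induction_on with
  | empty =>
    intro A B hA hB hAne hBne
    obtain ⟨k, -, hk, -⟩ := hwm A A B B hA hA hB hB hAne hAne hBne hBne
    exact ⟨k, hk, by simp⟩
  | insert a s _ ih =>
    intro A B hA hB hAne hBne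
    obtain ⟨k, -, hAU, hBV⟩ :=
      hwm A B (U a) (V a) hA hB (hU a) (hV a) hAne hBne (hUne a) (hVne a)
    rw [image_inter_nonempty_iff] at hAU hBV
    obtain ⟨n, ⟨_, ⟨x, hxA, rfl⟩, hxB⟩, hs⟩ := ih (A ∩ ω k ⁻¹' U a) (B ∩ ω k ⁻¹' V a)
      (hA.inter ((hU a).preimage (hc k))) (hB.inter ((hV a).preimage (hc k))) hAU hBV
    refine ⟨n, ⟨ω n x, mem_image_of_mem _ hxA.1, hxB.1⟩,
      (Finset.forall_mem_insert _ _ _).mpr ⟨?_, hs⟩⟩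
    exact ⟨ω n (ω k x), mem_image_of_mem _ hxA.2, by simpa [hcomm n k x] using hxB.2⟩

theorem IsWeaklyMixing.frequently_forall_image_inter_nonempty [T2Space X]
    (hwm : IsWeaklyMixing ω) (hc : ∀ n, Continuous (ω n))
    (hcomm : ∀ m n, Function.Commute (ω m) (ω n))
    {ι : Type*} [Finite ι] {U V : ι → Set X} (hU : ∀ i, IsOpen (U i))
    (hV : ∀ i, IsOpen (V i))
    (hUne : ∀ i, (U i).Nonempty) (hVne : ∀ i, (V i).Nonempty) :
    ∃ᶠ n in atTop, ∀ i, (ω n '' U i ∩ V i).Nonempty := by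
  rcases subsingleton_or_nontrivial X with hX | hX
  · refine Frequently.of_forall fun n i => ?_
    obtain ⟨u, hu⟩ := hUne i
    obtain ⟨v, hv⟩ := hVne i
    exact ⟨v, ⟨u, hu, Subsingleton.elim _ _⟩, hv⟩
  choose A B hA hB hAne hBne hAB using fun n => exists_isOpen_disjoint_image (hc n)
  refine frequently_atTop.mpr fun M => ?_
  obtain ⟨n, hn⟩ := hwm.exists_forall_image_inter_nonempty hc hcomm
    (U := Sum.elim (fun j : Fin M => A j) U) (V := Sum.elim (fun j : Fin M => B j) V)
    (Sum.forall.mpr ⟨fun j => hA j, hU⟩) (Sum.forall.mpr ⟨fun j => hB j, hV⟩)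
    (Sum.forall.mpr ⟨fun j => hAne j, hUne⟩) (Sum.forall.mpr ⟨fun j => hBne j, hVne⟩)
  refine ⟨n, le_of_not_gt fun hnM => ?_, fun i => hn (.inr i)⟩
  simpa [(hAB n).inter_eq] using hn (.inl ⟨n, hnM⟩)

end WeakMixing

theorem IsWeaklyMixing.exists_strictMono_tendsto_hausdorffDist {X : Type*} [MetricSpace X]
    [CompactSpace X] {ω : ℕ → X → X} (hwm : IsWeaklyMixing ω) (hc : ∀ n, Continuous (ω n))
    (hcomm : ∀ m n, Function.Commute (ω m) (ω n)) {ι : Type*} [Finite ι] {U : ι → Set X}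
    (hU : ∀ i, IsOpen (U i)) (hUne : ∀ i, (U i).Nonempty) :
    ∃ r : ℕ → ℕ, StrictMono r ∧ 1 ≤ r 0 ∧ ∀ i,
      Tendsto (fun j => hausdorffDist (closure (ω (r j) '' U i)) univ) atTop (𝓝 0) := by
  refine exists_strictMono_tendsto_zero_of_frequently
    (d := fun i n => hausdorffDist (closure (ω n '' U i)) univ) (fun _ _ => hausdorffDist_nonneg)
    fun ε hε => ?_
  obtain ⟨t, -, htfin, ht⟩ :=
    (isCompact_univ (X := X)).finite_cover_balls (by positivity : 0 < ε / 3)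
  have : Finite t := htfin.to_subtype
  refine (hwm.frequently_forall_image_inter_nonempty hc hcomm (U := fun p : ι × t => U p.1)
    (V := fun p => ball p.2 (ε / 3)) (fun p => hU p.1) (fun _ => isOpen_ball) (fun p => hUne p.1)
    fun p => nonempty_ball.mpr (by positivity)).mono fun n hn i => ?_
  rw [hausdorffDist_closure₁]
  have := hausdorffDist_univ_le_of_inter_ball_nonempty (S := ω n '' U i) (by positivity) ht
    fun c hc => hn (i, ⟨c, hc⟩)
  linarith

theorem isWeaklyMixing_of_forall_tendsto_hausdorffDist {X : Type*} [MetricSpace X]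
    [CompactSpace X] {ω : ℕ → X → X}
    (h : ∀ (m : ℕ) (U : Fin m → Set X), (∀ i, IsOpen (U i)) → (∀ i, (U i).Nonempty) →
      ∃ r : ℕ → ℕ, StrictMono r ∧ 1 ≤ r 0 ∧ ∀ i,
        Tendsto (fun j => hausdorffDist (closure (ω (r j) '' U i)) univ) atTop (𝓝 0)) :
    IsWeaklyMixing ω := by
  intro U₁ U₂ V₁ V₂ hU₁ hU₂ hV₁ hV₂ hU₁ne hU₂ne hV₁ne hV₂ne
  have hUne : ∀ i, (![U₁, U₂] i).Nonempty := Fin.forall_fin_two.mpr ⟨hU₁ne, hU₂ne⟩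
  obtain ⟨r, hr, hr0, htend⟩ := h 2 ![U₁, U₂] (Fin.forall_fin_two.mpr ⟨hU₁, hU₂⟩) hUne
  have hits : ∀ i, ∀ V, IsOpen V → V.Nonempty →
      ∀ᶠ j in atTop, (ω (r j) '' ![U₁, U₂] i ∩ V).Nonempty := fun i V hV hVne => by
    filter_upwards [eventually_inter_nonempty_of_tendsto_hausdorffDist
      (fun j => ((hUne i).image _).closure) (htend i) hV hVne] with j hj
    exact (closure_inter_open_nonempty_iff hV).mp hj
  obtain ⟨j, h₁, h₂⟩ := ((hits 0 V₁ hV₁ hV₁ne).and (hits 1 V₂ hV₂ hV₂ne)).exists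
  exact ⟨r j, hr0.trans (hr.monotone j.zero_le), h₁, h₂⟩

/-- For a commutative family `𝔽`, the non-autonomous system is weakly
mixing iff for every finite collection of nonempty open sets `U_1, ..., U_m` there
is a strictly increasing sequence `(r_n)` of positive integers such that
`closure (ω_{r_n}(U_i)) → X` in the Hausdorff metric for each `i`. -/
theorem stmt3 {X : Type*} [MetricSpace X] [CompactSpace X]
    (f : ℕ → X → X) (hfc : ∀ i, Continuous (f i))
    (hcomm : ∀ i j, f i ∘ f j = f j ∘ f i)
    (ω : ℕ → X → X) (hω0 : ω 0 = id)
    (hω : ∀ k, ω (k + 1) = f (k + 1) ∘ ω k) :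
    (∀ U₁ U₂ V₁ V₂ : Set X, IsOpen U₁ → IsOpen U₂ → IsOpen V₁ → IsOpen V₂ →
      U₁.Nonempty → U₂.Nonempty → V₁.Nonempty → V₂.Nonempty →
      ∃ k : ℕ, 1 ≤ k ∧ (ω k '' U₁ ∩ V₁).Nonempty ∧ (ω k '' U₂ ∩ V₂).Nonempty) ↔
    (∀ (m : ℕ) (U : Fin m → Set X), (∀ i, IsOpen (U i)) → (∀ i, (U i).Nonempty) →
      ∃ r : ℕ → ℕ, StrictMono r ∧ 1 ≤ r 0 ∧ ∀ i,
        Filter.Tendsto (fun j : ℕ => Metric.hausdorffDist (closure (ω (r j) '' U i)) (Set.univ : Set X))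
          Filter.atTop (nhds 0)) := by
  have hc := continuous_of_comp_succ hfc hω0 hω
  have hωcomm := commute_of_comp_succ (fun i j x => congrFun (hcomm i j) x) hω0 hω
  exact ⟨fun hwm _ _ hU hUne => IsWeaklyMixing.exists_strictMono_tendsto_hausdorffDist hwm hc
    hωcomm hU hUne, isWeaklyMixing_of_forall_tendsto_hausdorffDist⟩
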